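/- arXiv:2604.01200 — 2 statements merged into one kernel-verified Lean document; each statement's English description precedes it below -/
import Mathlib

section
/- Let q ≥ 1, h > 0, let K_h denote the scaled one-dimensional SIAC kernel, let p be a polynomial of degree at most q, let v_h(x) = χ_{[0,h]}(x) p(x) and F_p := K_h * v_h. Let B_h denote the finite set of points at which K_h is not smooth and S_h := B_h ∪ (B_h + h). Then for every integer m ≥ 1 and every x ∈ ℝ \\ S_h, the m-th derivative of F_p at x exists and satisfies F_p^{(m)}(x) = Σ_{ℓ=0}^{m−1} ( K_h^{(ℓ)}(x) p^{(m−1−ℓ)}(0) − K_h^{(ℓ)}(x − h) p^{(m−1−ℓ)}(h) ) + ∫_{x−h}^{x} K_h(z) p^{(m)}(x − z) dz, where K_h^{(ℓ)} denotes the ℓ-th derivative of K_h (defined on ℝ \\ B_h). -/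
open MeasureTheory
open scoped NNReal ENNReal

/-- The central B-spline of order `ℓ ≥ 1`: `ψ¹ = χ_{[-1/2,1/2]}` and
`ψ^{ℓ+1} = ψ¹ * ψ^ℓ` (convolution on `ℝ`).  The value for `ℓ = 0` is junk. -/
noncomputable def centralBSpline : ℕ → ℝ → ℝ
  | 0 => fun _ => 0
  | 1 => Set.indicator (Set.Icc (-(1 / 2) : ℝ) (1 / 2)) fun _ => (1 : ℝ)
  | n + 2 => fun x => ∫ y : ℝ,
      Set.indicator (Set.Icc (-(1 / 2) : ℝ) (1 / 2)) (fun _ => (1 : ℝ)) (x - y) *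
        centralBSpline (n + 1) y

/-- The one-dimensional SIAC kernel `K^{(2q+1,q+1)}` built from `2q+1` shifted central
B-splines of order `q+1`, with coefficient vector `c`. -/
noncomputable def siacKernel (q : ℕ) (c : Fin (2 * q + 1) → ℝ) : ℝ → ℝ :=
  fun x => ∑ γ : Fin (2 * q + 1), c γ * centralBSpline (q + 1) (x - (-(q : ℝ) + (γ : ℕ)))

/-- The scaled SIAC kernel `K_h(x) = h⁻¹ K^{(2q+1,q+1)}(x/h)`. -/
noncomputable def scaledSiacKernel (q : ℕ) (c : Fin (2 * q + 1) → ℝ) (h : ℝ) : ℝ → ℝ :=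
  fun x => h⁻¹ * siacKernel q c (x / h)

/-! ### Auxiliary results -/

lemma bspline_succ_eq (n : ℕ) (x : ℝ) :
    centralBSpline (n + 2) x = ∫ y in (x - 1/2)..(x + 1/2), centralBSpline (n + 1) y := by
  have hpt : ∀ y : ℝ,
      Set.indicator (Set.Icc (-(1 / 2) : ℝ) (1 / 2)) (fun _ => (1 : ℝ)) (x - y) *
        centralBSpline (n + 1) y
      = Set.indicator (Set.Icc (x - 1/2) (x + 1/2)) (centralBSpline (n + 1)) y := by
    intro y
    by_cases hy : y ∈ Set.Icc (x - 1/2) (x + 1/2)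
    · have hxy : x - y ∈ Set.Icc (-(1/2) : ℝ) (1/2) := by
        obtain ⟨h1, h2⟩ := hy; constructor <;> linarith
      rw [Set.indicator_of_mem hxy, Set.indicator_of_mem hy, one_mul]
    · have hxy : x - y ∉ Set.Icc (-(1/2) : ℝ) (1/2) := by
        intro ⟨h1, h2⟩; exact hy ⟨by linarith, by linarith⟩
      rw [Set.indicator_of_notMem hxy, Set.indicator_of_notMem hy, zero_mul]
  show (∫ y : ℝ, _) = _
  rw [show (fun y : ℝ =>
      Set.indicator (Set.Icc (-(1 / 2) : ℝ) (1 / 2)) (fun _ => (1 : ℝ)) (x - y) *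
        centralBSpline (n + 1) y)
    = Set.indicator (Set.Icc (x - 1/2) (x + 1/2)) (centralBSpline (n + 1)) from funext hpt]
  rw [MeasureTheory.integral_indicator measurableSet_Icc,
    intervalIntegral.integral_of_le (by linarith : x - 1/2 ≤ x + 1/2),
    ← MeasureTheory.integral_Icc_eq_integral_Ioc]

lemma bspline_one_integrable : Integrable (centralBSpline 1) volume := by
  show Integrable (Set.indicator _ _) volume
  rw [integrable_indicator_iff measurableSet_Icc]
  exact integrableOn_const measure_Icc_lt_top.ne

lemma bspline_cont_of_intInt (n : ℕ)
    (hint : ∀ a b : ℝ, IntervalIntegrable (centralBSpline (n + 1)) volume a b) :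
    Continuous (centralBSpline (n + 2)) := by
  have h1 : Continuous fun x : ℝ => ∫ y in (0:ℝ)..(x + 1/2), centralBSpline (n + 1) y :=
    (intervalIntegral.continuous_primitive hint 0).comp (continuous_add_right _)
  have h2 : Continuous fun x : ℝ => ∫ y in (0:ℝ)..(x - 1/2), centralBSpline (n + 1) y :=
    (intervalIntegral.continuous_primitive hint 0).comp (continuous_sub_right _)
  refine (h1.sub h2).congr fun x => ?_
  rw [bspline_succ_eq]
  exact intervalIntegral.integral_interval_sub_left (hint 0 _) (hint 0 _)

lemma bspline_intervalIntegrable (n : ℕ) (a b : ℝ) :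
    IntervalIntegrable (centralBSpline (n + 1)) volume a b := by
  induction n generalizing a b with
  | zero => exact bspline_one_integrable.intervalIntegrable
  | succ n ih => exact (bspline_cont_of_intInt n fun a b => ih a b).intervalIntegrable a b

lemma bspline_continuous (n : ℕ) : Continuous (centralBSpline (n + 2)) :=
  bspline_cont_of_intInt n (bspline_intervalIntegrable n)

lemma scaledSiacKernel_continuous (q : ℕ) (hq : 1 ≤ q) (c : Fin (2 * q + 1) → ℝ) (h : ℝ) :
    Continuous (scaledSiacKernel q c h) := by
  obtain ⟨q', rfl⟩ : ∃ q', q = q' + 1 := ⟨q - 1, (Nat.succ_pred_eq_of_pos hq).symm⟩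
  have hs : Continuous (siacKernel (q' + 1) c) := by
    refine continuous_finset_sum _ fun γ _ => Continuous.mul continuous_const ?_
    exact (bspline_continuous q').comp (continuous_sub_right _)
  exact continuous_const.mul (hs.comp (continuous_id.div_const h))

lemma polyIterDeriv (P : Polynomial ℝ) (n : ℕ) :
    iteratedDeriv n (fun y : ℝ => P.eval y) =
      fun y => (Polynomial.derivative^[n] P).eval y := by
  induction n with
  | zero => simp [iteratedDeriv_zero]
  | succ n ih =>
    rw [iteratedDeriv_succ, ih, Function.iterate_succ_apply']
    funext y
    exact Polynomial.deriv _

/-- The filtered function. -/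
noncomputable def Ffun (K : ℝ → ℝ) (h : ℝ) (P : Polynomial ℝ) : ℝ → ℝ :=
  fun x => ∫ z in (x - h)..x, K z * P.eval (x - z)

lemma Ffun_hasDerivAt {K : ℝ → ℝ} (hK : Continuous K) (h : ℝ) (P : Polynomial ℝ) (x₀ : ℝ) :
    HasDerivAt (Ffun K h P)
      (K x₀ * P.eval 0 - K (x₀ - h) * P.eval h + Ffun K h P.derivative x₀) x₀ := by
  classical
  set d := P.natDegree with hd
  set f : ℕ → ℝ → ℝ := fun i z => K z * (Polynomial.hasseDeriv i P).eval (x₀ - z) with hf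
  have hfc : ∀ i, Continuous (f i) := fun i =>
    hK.mul ((Polynomial.hasseDeriv i P).continuous.comp (continuous_const.sub continuous_id))
  set g : ℕ → ℝ → ℝ := fun i x => ∫ z in (x - h)..x, f i z with hg
  have hexp : ∀ x, Ffun K h P x = ∑ i ∈ Finset.range (d + 2), (x - x₀) ^ i * g i x := by
    intro x
    have hpt : ∀ z, K z * P.eval (x - z)
        = ∑ i ∈ Finset.range (d + 2), (x - x₀) ^ i * f i z := by
      intro z
      have ht : P.eval (x - z) = (Polynomial.taylor (x₀ - z) P).eval (x - x₀) := by
        rw [Polynomial.taylor_eval]; ring_nf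
      rw [ht, Polynomial.eval_eq_sum_range' (n := d + 2)
          (by rw [Polynomial.natDegree_taylor]; omega)]
      rw [Finset.mul_sum]
      refine Finset.sum_congr rfl fun i _ => ?_
      rw [Polynomial.taylor_coeff]
      simp only [hf]
      ring
    show (∫ z in (x - h)..x, K z * P.eval (x - z)) = _
    rw [intervalIntegral.integral_congr (g := fun z =>
        ∑ i ∈ Finset.range (d + 2), (x - x₀) ^ i * f i z) (fun z _ => hpt z)]
    rw [intervalIntegral.integral_finset_sum (f := fun i z => (x - x₀) ^ i * f i z) (fun i _ =>
      ((continuous_const.mul (hfc i)).intervalIntegrable _ _))]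
    exact Finset.sum_congr rfl fun i _ => intervalIntegral.integral_const_mul _ _
  have hgder : ∀ i x, HasDerivAt (g i) (f i x - f i (x - h)) x := by
    intro i x
    have hprim : ∀ y : ℝ, HasDerivAt (fun u => ∫ z in (0:ℝ)..u, f i z) (f i y) y := fun y =>
      intervalIntegral.integral_hasDerivAt_right ((hfc i).intervalIntegrable _ _)
        ((hfc i).stronglyMeasurableAtFilter _ _) (hfc i).continuousAt
    have h2 : HasDerivAt (fun u : ℝ => ∫ z in (0:ℝ)..(u - h), f i z) (f i (x - h)) x := by
      have := (hprim (x - h)).comp x ((hasDerivAt_id x).sub_const h)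
      simp at this; exact this
    have heq : g i = fun u => (∫ z in (0:ℝ)..u, f i z) - ∫ z in (0:ℝ)..(u - h), f i z := by
      funext u
      exact (intervalIntegral.integral_interval_sub_left ((hfc i).intervalIntegrable _ _)
        ((hfc i).intervalIntegrable _ _)).symm
    rw [heq]
    exact (hprim x).sub h2
  have hT : ∀ i ∈ Finset.range (d + 2), HasDerivAt (fun x => (x - x₀) ^ i * g i x)
      ((i : ℝ) * (0:ℝ) ^ (i - 1) * g i x₀ + (0:ℝ) ^ i * (f i x₀ - f i (x₀ - h))) x₀ := by
    intro i _
    have hp : HasDerivAt (fun x : ℝ => (x - x₀) ^ i) ((i : ℝ) * (0:ℝ) ^ (i - 1)) x₀ := by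
      have := ((hasDerivAt_id x₀).sub_const x₀).pow i
      simp at this; exact this
    have := hp.mul (hgder i x₀)
    simp at this; exact this
  have hsum := HasDerivAt.fun_sum hT
  have hF : HasDerivAt (Ffun K h P)
      (∑ i ∈ Finset.range (d + 2),
        ((i : ℝ) * (0:ℝ) ^ (i - 1) * g i x₀ + (0:ℝ) ^ i * (f i x₀ - f i (x₀ - h)))) x₀ :=
    hsum.congr_of_eventuallyEq (Filter.Eventually.of_forall hexp)
  convert hF using 1
  rw [Finset.sum_range_succ', Finset.sum_range_succ']
  rw [Finset.sum_eq_zero (fun i _ => by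
    simp [zero_pow, Nat.succ_ne_zero])]
  have hf0 : f 0 x₀ = K x₀ * P.eval 0 := by
    simp [hf, Polynomial.hasseDeriv_zero', sub_self]
  have hf0' : f 0 (x₀ - h) = K (x₀ - h) * P.eval h := by
    simp [hf, Polynomial.hasseDeriv_zero', sub_sub_cancel]
  have hg1 : g 1 x₀ = Ffun K h P.derivative x₀ := by
    simp [hg, hf, Ffun, Polynomial.hasseDeriv_one']
  simp [hf0, hf0', hg1]
  ring

lemma contDiffAt_of_hasDerivAt {f g : ℝ → ℝ} {x₀ : ℝ}
    (hf : ContDiffAt ℝ (⊤ : ℕ∞) f x₀) (hg : ∀ y : ℝ, HasDerivAt g (f y) y) :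
    ContDiffAt ℝ (⊤ : ℕ∞) g x₀ := by
  rw [contDiffAt_infty]
  intro n
  have h1 : ContDiffAt ℝ ((n : ℕ) + 1) g x₀ := by
    refine contDiffAt_succ_iff_hasFDerivAt.2
      ⟨fun y => (1 : ℝ →L[ℝ] ℝ).smulRight (f y),
        ⟨Set.univ, Filter.univ_mem, fun y _ => (hg y).hasFDerivAt⟩, ?_⟩
    have hfn : ContDiffAt ℝ n f x₀ := hf.of_le (by exact_mod_cast le_top)
    exact (ContinuousLinearMap.smulRightL ℝ ℝ ℝ (1 : ℝ →L[ℝ] ℝ)).contDiff.contDiffAt.comp x₀ hfn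
  exact h1.of_le (by exact_mod_cast Nat.le_succ n)

lemma analyticOnNhd_iteratedDeriv {f : ℝ → ℝ} {V : Set ℝ} (hV : IsOpen V)
    (hf : ContDiffOn ℝ (⊤ : ℕ∞) f V) (l : ℕ) :
    ContDiffOn ℝ (⊤ : ℕ∞) (iteratedDeriv l f) V := by
  induction l with
  | zero => simpa using hf
  | succ l ih =>
    rw [iteratedDeriv_succ]
    exact ih.deriv_of_isOpen hV (le_of_eq rfl)

lemma hasDerivAt_iteratedDeriv' {f : ℝ → ℝ} {V : Set ℝ} (hV : IsOpen V)
    (hf : ContDiffOn ℝ (⊤ : ℕ∞) f V) (l : ℕ) {x : ℝ} (hx : x ∈ V) :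
    HasDerivAt (iteratedDeriv l f) (iteratedDeriv (l + 1) f x) x := by
  have h1 := (analyticOnNhd_iteratedDeriv hV hf l).contDiffAt (hV.mem_nhds hx)
  rw [iteratedDeriv_succ]
  exact (h1.differentiableAt (by simp)).hasDerivAt

lemma Ffun_analyticAt {K : ℝ → ℝ} {V : Set ℝ} {h : ℝ} (hK : Continuous K)
    (hKV : ∀ x ∈ V, ContDiffAt ℝ (⊤ : ℕ∞) K x) :
    ∀ (n : ℕ) (Q : Polynomial ℝ), Q.natDegree ≤ n → ∀ x₀ : ℝ, x₀ ∈ V → x₀ - h ∈ V →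
      ContDiffAt ℝ (⊤ : ℕ∞) (Ffun K h Q) x₀ := by
  intro n
  induction n with
  | zero =>
    intro Q hQ x₀ hx hx'
    obtain ⟨a, rfl⟩ := Polynomial.natDegree_eq_zero.1 (le_antisymm hQ (Nat.zero_le _))
    have hKh : ContDiffAt ℝ (⊤ : ℕ∞) (fun x : ℝ => K (x - h)) x₀ := by
      have h0 : ContDiffAt ℝ (⊤ : ℕ∞) K ((fun x : ℝ => x - h) x₀) := hKV _ hx'
      have := ContDiffAt.comp (g := K) (f := fun x : ℝ => x - h) x₀ h0
        ((contDiffAt_id).sub contDiffAt_const)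
      simpa [Function.comp_def] using this
    have hder : ContDiffAt ℝ (⊤ : ℕ∞)
        (fun x => K x * (Polynomial.C a).eval 0 - K (x - h) * (Polynomial.C a).eval h
          + Ffun K h (Polynomial.C a).derivative x) x₀ := by
      have hzero : Ffun K h (Polynomial.C a).derivative = fun _ => (0:ℝ) := by
        funext x
        simp [Ffun, Polynomial.derivative_C]
      rw [hzero]
      exact ((((hKV _ hx).mul contDiffAt_const).sub
        (hKh.mul contDiffAt_const)).add contDiffAt_const)
    exact contDiffAt_of_hasDerivAt hder (fun y => Ffun_hasDerivAt hK h _ y)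
  | succ n ih =>
    intro Q hQ x₀ hx hx'
    have hKh : ContDiffAt ℝ (⊤ : ℕ∞) (fun x : ℝ => K (x - h)) x₀ := by
      have h0 : ContDiffAt ℝ (⊤ : ℕ∞) K ((fun x : ℝ => x - h) x₀) := hKV _ hx'
      have := ContDiffAt.comp (g := K) (f := fun x : ℝ => x - h) x₀ h0
        ((contDiffAt_id).sub contDiffAt_const)
      simpa [Function.comp_def] using this
    have htail : ContDiffAt ℝ (⊤ : ℕ∞) (Ffun K h Q.derivative) x₀ :=
      ih Q.derivative (le_trans (Polynomial.natDegree_derivative_le Q) (by omega)) x₀ hx hx'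
    have hder : ContDiffAt ℝ (⊤ : ℕ∞)
        (fun x => K x * Q.eval 0 - K (x - h) * Q.eval h + Ffun K h Q.derivative x) x₀ :=
      (((hKV _ hx).mul contDiffAt_const).sub (hKh.mul contDiffAt_const)).add htail
    exact contDiffAt_of_hasDerivAt hder (fun y => Ffun_hasDerivAt hK h _ y)
/-- **Higher derivatives of the SIAC filtering of a single-cell piecewise polynomial.**
With `K_h` the scaled SIAC kernel, `p` a polynomial of degree at most `q`,
`v_h = χ_{[0,h]} p` and `F_p = K_h * v_h`, `B_h` the finite set of points where `K_h`
is not smooth and `S_h = B_h ∪ (B_h + h)`: `F_p` is smooth away from `S_h` and, for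
every `m ≥ 1` and every `x ∉ S_h`,
`F_p^{(m)}(x) = ∑_{ℓ=0}^{m-1} ( K_h^{(ℓ)}(x) p^{(m-1-ℓ)}(0) - K_h^{(ℓ)}(x-h) p^{(m-1-ℓ)}(h) )
  + ∫_{x-h}^x K_h(z) p^{(m)}(x-z) dz`. -/
theorem siac_filtered_higher_derivatives
    (q : ℕ) (hq : 1 ≤ q) (h : ℝ) (hh : 0 < h) (c : Fin (2 * q + 1) → ℝ)
    (hrep : ∀ p : ℕ, p ≤ 2 * q → ∀ x : ℝ,
      (∫ y : ℝ, siacKernel q c y * (x - y) ^ p) = x ^ p)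
    (B : Finset ℝ)
    (hB : ∀ x : ℝ, x ∉ (B : Set ℝ) → ContDiffAt ℝ (⊤ : ℕ∞) (scaledSiacKernel q c h) x)
    (hB' : ∀ x ∈ (B : Set ℝ), ¬ ContDiffAt ℝ (⊤ : ℕ∞) (scaledSiacKernel q c h) x)
    (P : Polynomial ℝ) (hP : P.natDegree ≤ q) :
    ContDiffOn ℝ (⊤ : ℕ∞)
      (fun x' : ℝ => ∫ z in (x' - h)..x', scaledSiacKernel q c h z * P.eval (x' - z))
      (((B : Set ℝ) ∪ ((fun b => b + h) '' (B : Set ℝ)))ᶜ) ∧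
    ∀ m : ℕ, 1 ≤ m → ∀ x : ℝ, x ∉ (B : Set ℝ) ∪ ((fun b => b + h) '' (B : Set ℝ)) →
      iteratedDeriv m
          (fun x' : ℝ => ∫ z in (x' - h)..x', scaledSiacKernel q c h z * P.eval (x' - z)) x
        = (∑ l ∈ Finset.range m,
            (iteratedDeriv l (scaledSiacKernel q c h) x
                * iteratedDeriv (m - 1 - l) (fun y : ℝ => P.eval y) 0
              - iteratedDeriv l (scaledSiacKernel q c h) (x - h)
                * iteratedDeriv (m - 1 - l) (fun y : ℝ => P.eval y) h))
          + ∫ z in (x - h)..x,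
              scaledSiacKernel q c h z * iteratedDeriv m (fun y : ℝ => P.eval y) (x - z) := by
  classical
  set K := scaledSiacKernel q c h with hKdef
  have hK : Continuous K := scaledSiacKernel_continuous q hq c h
  set U : Set ℝ := ((B : Set ℝ) ∪ ((fun b => b + h) '' (B : Set ℝ)))ᶜ with hU
  have hUopen : IsOpen U := by
    exact isOpen_compl_iff.2 ((B.finite_toSet.union (B.finite_toSet.image _)).isClosed)
  have hBo : IsOpen ((B : Set ℝ)ᶜ) := B.finite_toSet.isClosed.isOpen_compl
  have hKV : ContDiffOn ℝ (⊤ : ℕ∞) K ((B : Set ℝ)ᶜ) := fun x hx => (hB x hx).contDiffWithinAt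
  have hmem : ∀ x ∈ U, x ∈ ((B : Set ℝ)ᶜ) ∧ x - h ∈ ((B : Set ℝ)ᶜ) := by
    intro x hx
    rw [hU, Set.mem_compl_iff, Set.mem_union] at hx
    push_neg at hx
    refine ⟨hx.1, fun hmem => hx.2 ⟨x - h, hmem, by ring⟩⟩
  have hFeq : (fun x' : ℝ => ∫ z in (x' - h)..x', scaledSiacKernel q c h z * P.eval (x' - z))
      = Ffun K h P := rfl
  constructor
  · rw [hFeq]
    intro x hx
    have hana : ContDiffAt ℝ (⊤ : ℕ∞) (Ffun K h P) x :=
      Ffun_analyticAt hK (fun y hy => hB y hy) P.natDegree P le_rfl x (hmem x hx).1 (hmem x hx).2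
    exact hana.contDiffWithinAt
  · have main : ∀ n : ℕ, ∀ x ∈ U,
        iteratedDeriv (n + 1) (Ffun K h P) x
          = (∑ l ∈ Finset.range (n + 1),
              (iteratedDeriv l K x * (Polynomial.derivative^[n - l] P).eval 0
                - iteratedDeriv l K (x - h) * (Polynomial.derivative^[n - l] P).eval h))
            + Ffun K h (Polynomial.derivative^[n + 1] P) x := by
      intro n
      induction n with
      | zero =>
        intro x hx
        rw [iteratedDeriv_one, (Ffun_hasDerivAt hK h P x).deriv]
        simp [iteratedDeriv_zero]
      | succ n ih =>
        intro x hx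
        rw [iteratedDeriv_succ]
        have hEE : iteratedDeriv (n + 1) (Ffun K h P) =ᶠ[nhds x]
            (fun y => (∑ l ∈ Finset.range (n + 1),
              (iteratedDeriv l K y * (Polynomial.derivative^[n - l] P).eval 0
                - iteratedDeriv l K (y - h) * (Polynomial.derivative^[n - l] P).eval h))
            + Ffun K h (Polynomial.derivative^[n + 1] P) y) :=
          Filter.eventuallyEq_of_mem (hUopen.mem_nhds hx) (fun y hy => ih y hy)
        rw [hEE.deriv_eq]
        have hshift : ∀ l : ℕ, HasDerivAt (fun y : ℝ => iteratedDeriv l K (y - h))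
            (iteratedDeriv (l + 1) K (x - h)) x := by
          intro l
          have := (hasDerivAt_iteratedDeriv' hBo hKV l (hmem x hx).2).comp x
            ((hasDerivAt_id x).sub_const h)
          simpa [Function.comp_def] using this
        have hterm : ∀ l ∈ Finset.range (n + 1), HasDerivAt
            (fun y => iteratedDeriv l K y * (Polynomial.derivative^[n - l] P).eval 0
              - iteratedDeriv l K (y - h) * (Polynomial.derivative^[n - l] P).eval h)
            (iteratedDeriv (l + 1) K x * (Polynomial.derivative^[n - l] P).eval 0
              - iteratedDeriv (l + 1) K (x - h) * (Polynomial.derivative^[n - l] P).eval h)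
            x := fun l _ =>
          ((hasDerivAt_iteratedDeriv' hBo hKV l (hmem x hx).1).mul_const _).sub
            ((hshift l).mul_const _)
        have hRHS := (HasDerivAt.fun_sum hterm).fun_add
          (Ffun_hasDerivAt hK h (Polynomial.derivative^[n + 1] P) x)
        rw [hRHS.deriv]
        rw [Finset.sum_range_succ' (fun l =>
          iteratedDeriv l K x * (Polynomial.derivative^[n + 1 - l] P).eval 0
            - iteratedDeriv l K (x - h) * (Polynomial.derivative^[n + 1 - l] P).eval h) (n + 1)]
        have hps : (Polynomial.derivative^[n + 1] P).derivative
            = Polynomial.derivative^[n + 1 + 1] P := (Function.iterate_succ_apply' _ _ _).symm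
        rw [hps]
        simp only [Nat.succ_sub_succ, iteratedDeriv_zero, Nat.sub_zero]
        ring
    intro m hm x hx
    obtain ⟨n, rfl⟩ : ∃ n, m = n + 1 := ⟨m - 1, (Nat.succ_pred_eq_of_pos hm).symm⟩
    rw [hFeq]
    have hmain := main n x hx
    rw [hmain]
    have hpoly : ∀ j : ℕ, iteratedDeriv j (fun y : ℝ => P.eval y)
        = fun y => (Polynomial.derivative^[j] P).eval y := fun j => polyIterDeriv P j
    congr 1
    · refine Finset.sum_congr rfl fun l hl => ?_
      rw [hpoly]
      simp [Nat.succ_sub_one]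
    · rw [hpoly]
      rfl
end

section
/- Let q ≥ 1, h > 0, let K_h denote the scaled one-dimensional SIAC kernel, let p be a polynomial of degree at most q, let v_h(x) = χ_{[0,h]}(x) p(x) and F_p := K_h * v_h. Let B_h denote the finite set of points at which K_h is not smooth and S_h := B_h ∪ (B_h + h). Then F_p^{(2q+2)}(x) = 0 for every x ∈ ℝ \\ S_h; consequently, on each open interval disjoint from S_h, F_p coincides with a polynomial of degree at most 2q+1, so the polynomial representation of the SIAC-filtered function K_h * v_h can change only at points of S_h. -/
open MeasureTheory

open MeasureTheory Polynomial Filter Set intervalIntegral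

/-- interval integrability of measurable globally bounded functions -/
lemma my_intervalIntegrable {f : ℝ → ℝ} (hf : Measurable f) {C : ℝ}
    (hC : ∀ x, |f x| ≤ C) (a b : ℝ) : IntervalIntegrable f volume a b := by
  rw [intervalIntegrable_iff]
  refine Integrable.mono' (g := fun _ => C) ?_ hf.aestronglyMeasurable
    (ae_of_all _ fun x => by simpa using hC x)
  exact integrableOn_const measure_Ioc_lt_top.ne

lemma centralBSpline_succ_eq (m : ℕ) (x : ℝ) : centralBSpline (m+2) x
    = ∫ t in (x - 1/2)..(x + 1/2), centralBSpline (m+1) t := by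
  have h1 : ∀ y : ℝ, Set.indicator (Set.Icc (-(1 / 2) : ℝ) (1 / 2))
      (fun _ => (1 : ℝ)) (x - y) * centralBSpline (m+1) y
      = Set.indicator (Set.Icc (x - 1/2) (x + 1/2)) (centralBSpline (m+1)) y := by
    intro y
    by_cases hy : y ∈ Set.Icc (x - 1/2) (x + 1/2)
    · have hx : x - y ∈ Set.Icc (-(1/2) : ℝ) (1/2) := by
        obtain ⟨h1, h2⟩ := hy; constructor <;> [linarith; linarith]
      rw [Set.indicator_of_mem hx, Set.indicator_of_mem hy, one_mul]
    · have hx : x - y ∉ Set.Icc (-(1/2) : ℝ) (1/2) := by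
        intro ⟨h1, h2⟩
        exact hy ⟨by linarith, by linarith⟩
      rw [Set.indicator_of_notMem hx, Set.indicator_of_notMem hy, zero_mul]
  simp only [centralBSpline]
  rw [show (fun y : ℝ => Set.indicator (Set.Icc (-(1 / 2) : ℝ) (1 / 2))
      (fun _ => (1 : ℝ)) (x - y) * centralBSpline (m+1) y)
      = Set.indicator (Set.Icc (x - 1/2) (x + 1/2)) (centralBSpline (m+1))
      from funext h1]
  rw [MeasureTheory.integral_indicator measurableSet_Icc,
    MeasureTheory.integral_Icc_eq_integral_Ioc,
    ← intervalIntegral.integral_of_le (by linarith : x - 1/2 ≤ x + 1/2)]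

lemma centralBSpline_meas_bdd (n : ℕ) :
    Measurable (centralBSpline n) ∧ ∀ x, |centralBSpline n x| ≤ 1 := by
  induction n using Nat.strong_induction_on with
  | _ n ih =>
    match n with
    | 0 => exact ⟨measurable_const, fun x => by simp [centralBSpline]⟩
    | 1 =>
      simp only [centralBSpline]
      refine ⟨Measurable.indicator measurable_const measurableSet_Icc, fun x => ?_⟩
      by_cases hx : x ∈ Set.Icc (-(1/2) : ℝ) (1/2)
      · rw [Set.indicator_of_mem hx]; norm_num
      · rw [Set.indicator_of_notMem hx]; norm_num
    | (m+2) =>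
      obtain ⟨hm, hb⟩ := ih (m+1) (by omega)
      have hint : ∀ a b : ℝ, IntervalIntegrable (centralBSpline (m+1)) volume a b :=
        my_intervalIntegrable hm hb
      constructor
      · have : Continuous (centralBSpline (m+2)) := by
          rw [show centralBSpline (m+2) = fun x =>
            (∫ t in (0:ℝ)..(x + 1/2), centralBSpline (m+1) t)
            - ∫ t in (0:ℝ)..(x - 1/2), centralBSpline (m+1) t from funext fun x => by
              rw [centralBSpline_succ_eq m x,
                ← intervalIntegral.integral_interval_sub_left (hint 0 (x+1/2))
                (hint 0 (x-1/2))]]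
          exact ((intervalIntegral.continuous_primitive hint 0).comp
            (continuous_id.add continuous_const)).sub
            ((intervalIntegral.continuous_primitive hint 0).comp
            (continuous_id.sub continuous_const))
        exact this.measurable
      · intro x
        rw [centralBSpline_succ_eq m x]
        have := intervalIntegral.norm_integral_le_of_norm_le_const
          (C := 1) (a := x - 1/2) (b := x + 1/2) (f := centralBSpline (m+1))
          (fun y _ => by simpa using hb y)
        simpa using this.trans (by norm_num)
/-- Two polynomials whose evaluations agree near a point are equal. -/
lemma poly_eq_of_eventually {Q₁ Q₂ : Polynomial ℝ} {z : ℝ}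
    (h : ∀ᶠ y in nhds z, Q₁.eval y = Q₂.eval y) : Q₁ = Q₂ := by
  obtain ⟨ε, hε, hball⟩ := Metric.eventually_nhds_iff_ball.1 h
  refine Polynomial.eq_of_infinite_eval_eq _ _ (Set.Infinite.mono ?_
    (Set.Ioo_infinite (show z - ε < z + ε by linarith)))
  intro y hy
  refine hball y ?_
  rw [Metric.mem_ball, Real.dist_eq]
  obtain ⟨h1, h2⟩ := hy
  rw [abs_lt]; constructor <;> linarith

/-- Gluing local polynomial descriptions over a preconnected open set. -/
lemma polyGlue {f : ℝ → ℝ} {n : ℕ} {U : Set ℝ} (hU : IsPreconnected U) (hUo : IsOpen U)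
    (hloc : ∀ x ∈ U, ∃ Q : Polynomial ℝ, Q.natDegree ≤ n ∧ ∀ᶠ y in nhds x, f y = Q.eval y) :
    ∃ Q : Polynomial ℝ, Q.natDegree ≤ n ∧ ∀ x ∈ U, f x = Q.eval x := by
  rcases U.eq_empty_or_nonempty with rfl | ⟨x₀, hx₀⟩
  · exact ⟨0, by simp, by simp⟩
  obtain ⟨Q₀, hQ₀, hev₀⟩ := hloc x₀ hx₀
  have hAopen : IsOpen {x : ℝ | ∀ᶠ y in nhds x, f y = Q₀.eval y} := isOpen_setOf_eventually_nhds
  have hBopen : IsOpen {x : ℝ | ∃ Q : Polynomial ℝ, Q ≠ Q₀ ∧ ∀ᶠ y in nhds x, f y = Q.eval y} := by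
    rw [isOpen_iff_mem_nhds]
    rintro x ⟨Q, hQne, hev⟩
    exact hev.eventually_nhds.mono fun y hy => ⟨Q, hQne, hy⟩
  have hcover : U ⊆ {x : ℝ | ∀ᶠ y in nhds x, f y = Q₀.eval y}
      ∪ {x : ℝ | ∃ Q : Polynomial ℝ, Q ≠ Q₀ ∧ ∀ᶠ y in nhds x, f y = Q.eval y} := by
    intro x hx
    obtain ⟨Q, _, hev⟩ := hloc x hx
    by_cases hQ : Q = Q₀
    · exact Or.inl (Set.mem_setOf_eq ▸ (hQ ▸ hev))
    · exact Or.inr ⟨Q, hQ, hev⟩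
  have hUA : ∀ x ∈ U, ∀ᶠ y in nhds x, f y = Q₀.eval y := by
    intro x hx
    by_contra hxA
    have hxB : x ∈ {x : ℝ | ∃ Q : Polynomial ℝ, Q ≠ Q₀ ∧ ∀ᶠ y in nhds x, f y = Q.eval y} :=
      (hcover hx).resolve_left hxA
    obtain ⟨z, _, hzA, hzB⟩ := hU _ _ hAopen hBopen hcover ⟨x₀, hx₀, hev₀⟩ ⟨x, hx, hxB⟩
    obtain ⟨Q, hQne, hev⟩ := hzB
    exact hQne (poly_eq_of_eventually ((hev.and hzA).mono fun y ⟨h1, h2⟩ => h1 ▸ h2))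
  exact ⟨Q₀, hQ₀, fun x hx => (hUA x hx).self_of_nhds⟩

/-- Polynomial antiderivative. -/
noncomputable def polyAntideriv (Q : Polynomial ℝ) : Polynomial ℝ :=
  Q.sum fun n a => Polynomial.C (a / (n+1)) * Polynomial.X^(n+1)

lemma polyAntideriv_derivative (Q : Polynomial ℝ) : (polyAntideriv Q).derivative = Q := by
  unfold polyAntideriv
  rw [Polynomial.sum, map_sum]
  conv_rhs => rw [← Polynomial.sum_C_mul_X_pow_eq Q, Polynomial.sum]
  refine Finset.sum_congr rfl fun n _ => ?_
  rw [Polynomial.derivative_C_mul, Polynomial.derivative_X_pow]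
  push_cast
  rw [← mul_assoc, ← Polynomial.C_mul,
    div_mul_cancel₀ _ (by positivity : ((n : ℝ) + 1) ≠ 0)]

lemma polyAntideriv_natDegree (Q : Polynomial ℝ) :
    (polyAntideriv Q).natDegree ≤ Q.natDegree + 1 := by
  unfold polyAntideriv
  rw [Polynomial.sum]
  refine Polynomial.natDegree_sum_le_of_forall_le _ _ fun i hi => ?_
  refine (Polynomial.natDegree_C_mul_le _ _).trans ?_
  rw [Polynomial.natDegree_X_pow]
  exact Nat.add_le_add_right (Polynomial.le_natDegree_of_mem_supp i hi) 1

lemma polyAntideriv_hasDerivAt (Q : Polynomial ℝ) (x : ℝ) :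
    HasDerivAt (fun t => (polyAntideriv Q).eval t) (Q.eval x) x := by
  have := (polyAntideriv Q).hasDerivAt x
  rwa [polyAntideriv_derivative] at this

lemma poly_integral (Q : Polynomial ℝ) (a b : ℝ) :
    ∫ t in a..b, Q.eval t = (polyAntideriv Q).eval b - (polyAntideriv Q).eval a :=
  intervalIntegral.integral_eq_sub_of_hasDerivAt
    (fun x _ => polyAntideriv_hasDerivAt Q x)
    (Q.continuous.intervalIntegrable _ _)

/-- iterated deriv of polynomial evaluation -/
lemma poly_iteratedDeriv (Q : Polynomial ℝ) (j : ℕ) :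
    iteratedDeriv j (fun t => Q.eval t) = fun t => (Polynomial.derivative^[j] Q).eval t := by
  induction j generalizing Q with
  | zero => simp
  | succ j ih =>
    rw [iteratedDeriv_succ']
    rw [show deriv (fun t => Q.eval t) = fun t => Q.derivative.eval t from
      funext fun t => Polynomial.deriv Q]
    rw [ih Q.derivative]
    funext t
    rw [Function.iterate_succ_apply]

/-- A polynomial of degree ≤ n all of whose derivatives of order ≤ n vanish at a point is 0 -/
lemma poly_zero_of_derivs {R : Polynomial ℝ} {n : ℕ} {x : ℝ} (hdeg : R.natDegree ≤ n)
    (hvan : ∀ j ≤ n, (Polynomial.derivative^[j] R).eval x = 0) : R = 0 := by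
  have h : Polynomial.taylor x R = 0 := by
    ext k
    rw [Polynomial.taylor_coeff, Polynomial.coeff_zero]
    by_cases hk : k ≤ n
    · have h1 : (Nat.factorial k : ℝ) * (Polynomial.hasseDeriv k R).eval x
          = (Polynomial.derivative^[k] R).eval x := by
        rw [← Polynomial.factorial_smul_hasseDeriv (R := ℝ) (k := k)]
        simp [nsmul_eq_mul]
      have hfac : (Nat.factorial k : ℝ) ≠ 0 := Nat.cast_ne_zero.2 (Nat.factorial_ne_zero k)
      have := hvan k hk
      rw [← h1] at this
      exact (mul_eq_zero.1 this).resolve_left hfac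
    · rw [← Polynomial.taylor_coeff]
      refine Polynomial.coeff_eq_zero_of_natDegree_lt ?_
      rw [Polynomial.natDegree_taylor]
      omega
  have := Polynomial.taylor_injective x (h.trans (map_zero (Polynomial.taylor x)).symm)
  simpa using this
lemma uIcc_subset_ball {a b x ε : ℝ} (ha : |a - x| < ε) (hb : |b - x| < ε) :
    Set.uIcc a b ⊆ Metric.ball x ε := by
  intro y hy
  rw [Set.mem_uIcc] at hy
  rw [Metric.mem_ball, Real.dist_eq, abs_lt]
  rw [abs_lt] at ha hb
  rcases hy with ⟨h1, h2⟩ | ⟨h1, h2⟩ <;> constructor <;> linarith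

lemma centralBSpline_locPoly (ℓ : ℕ) :
    ∃ D : Finset ℝ, ∀ x : ℝ, x ∉ D → ∃ Q : Polynomial ℝ, Q.natDegree ≤ ℓ ∧
      ∀ᶠ y in nhds x, centralBSpline (ℓ+1) y = Q.eval y := by
  induction ℓ with
  | zero =>
    refine ⟨{-(1/2), 1/2}, fun x hx => ?_⟩
    simp only [Finset.mem_insert, Finset.mem_singleton, not_or] at hx
    obtain ⟨hx1, hx2⟩ := hx
    rcases lt_trichotomy x (-(1/2) : ℝ) with h | h | h
    · refine ⟨0, by simp, ?_⟩
      filter_upwards [Iio_mem_nhds h] with y hy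
      simp only [centralBSpline, Polynomial.eval_zero]
      rw [Set.indicator_of_notMem]
      intro hmem
      rw [Set.mem_Iio] at hy
      exact absurd hmem.1 (by linarith)
    · exact absurd h hx1
    · rcases lt_trichotomy x (1/2 : ℝ) with h2 | h2 | h2
      · refine ⟨1, by simp, ?_⟩
        filter_upwards [Ioo_mem_nhds h h2] with y hy
        simp only [centralBSpline, Polynomial.eval_one]
        have hmem : y ∈ Set.Icc (-(1/2) : ℝ) (1/2) := ⟨hy.1.le, hy.2.le⟩
        rw [Set.indicator_of_mem hmem]
      · exact absurd h2 hx2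
      · refine ⟨0, by simp, ?_⟩
        filter_upwards [Ioi_mem_nhds h2] with y hy
        simp only [centralBSpline, Polynomial.eval_zero]
        rw [Set.indicator_of_notMem]
        intro hmem
        rw [Set.mem_Ioi] at hy
        exact absurd hmem.2 (by linarith)
  | succ ℓ ih =>
    obtain ⟨D, hD⟩ := ih
    refine ⟨D.image (fun d => d - 1/2) ∪ D.image (fun d => d + 1/2), fun x hx => ?_⟩
    simp only [Finset.mem_union, Finset.mem_image, not_or, not_exists, not_and] at hx
    obtain ⟨hxm, hxp⟩ := hx
    have hxP : x + 1/2 ∉ D := fun hmem => hxm _ hmem (show x + 1/2 - 1/2 = x by ring)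
    have hxM : x - 1/2 ∉ D := fun hmem => hxp _ hmem (show x - 1/2 + 1/2 = x by ring)
    obtain ⟨Qp, hQpdeg, hQp⟩ := hD (x + 1/2) hxP
    obtain ⟨Qm, hQmdeg, hQm⟩ := hD (x - 1/2) hxM
    obtain ⟨e1, he1, hball1⟩ := Metric.eventually_nhds_iff_ball.1 hQp
    obtain ⟨e2, he2, hball2⟩ := Metric.eventually_nhds_iff_ball.1 hQm
    obtain ⟨hmeas, hbd⟩ := centralBSpline_meas_bdd (ℓ+1)
    have hint := my_intervalIntegrable hmeas hbd
    refine ⟨(polyAntideriv Qp).comp (Polynomial.X + Polynomial.C (1/2))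
        - (polyAntideriv Qm).comp (Polynomial.X + Polynomial.C (-(1/2)))
        + Polynomial.C (centralBSpline (ℓ+2) x - (polyAntideriv Qp).eval (x+1/2)
            + (polyAntideriv Qm).eval (x-1/2)), ?_, ?_⟩
    · refine (Polynomial.natDegree_add_le _ _).trans (max_le (le_trans
        (Polynomial.natDegree_sub_le _ _) (max_le ?_ ?_)) (by simp)) <;>
      · refine (Polynomial.natDegree_comp_le).trans ?_
        refine le_trans (Nat.mul_le_mul (polyAntideriv_natDegree _)
          (le_of_eq (Polynomial.natDegree_X_add_C _))) ?_
        simp only [mul_one]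
        omega
    · rw [Metric.eventually_nhds_iff_ball]
      refine ⟨min e1 e2, lt_min he1 he2, fun t ht => ?_⟩
      rw [Metric.mem_ball, Real.dist_eq] at ht
      have h1 : ∫ s in (x+1/2)..(t+1/2), centralBSpline (ℓ+1) s
          = (polyAntideriv Qp).eval (t+1/2) - (polyAntideriv Qp).eval (x+1/2) := by
        rw [intervalIntegral.integral_congr (g := fun s => Qp.eval s), poly_integral]
        intro s hs
        refine hball1 s (uIcc_subset_ball ?_ ?_ hs)
        · simpa using he1
        · have : t + 1/2 - (x + 1/2) = t - x := by ring
          rw [this]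
          exact lt_of_lt_of_le ht (min_le_left _ _)
      have h2 : ∫ s in (x-1/2)..(t-1/2), centralBSpline (ℓ+1) s
          = (polyAntideriv Qm).eval (t-1/2) - (polyAntideriv Qm).eval (x-1/2) := by
        rw [intervalIntegral.integral_congr (g := fun s => Qm.eval s), poly_integral]
        intro s hs
        refine hball2 s (uIcc_subset_ball ?_ ?_ hs)
        · simpa using he2
        · have : t - 1/2 - (x - 1/2) = t - x := by ring
          rw [this]
          exact lt_of_lt_of_le ht (min_le_right _ _)
      have hPr : ∀ u v : ℝ, (∫ s in u..v, centralBSpline (ℓ+1) s)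
          = (∫ s in (0:ℝ)..v, centralBSpline (ℓ+1) s)
            - ∫ s in (0:ℝ)..u, centralBSpline (ℓ+1) s :=
        fun u v => (intervalIntegral.integral_interval_sub_left (hint 0 v) (hint 0 u)).symm
      have h3 : centralBSpline (ℓ+2) t - centralBSpline (ℓ+2) x
          = (∫ s in (x+1/2)..(t+1/2), centralBSpline (ℓ+1) s)
            - ∫ s in (x-1/2)..(t-1/2), centralBSpline (ℓ+1) s := by
        rw [centralBSpline_succ_eq ℓ t, centralBSpline_succ_eq ℓ x,
          hPr (t-1/2) (t+1/2), hPr (x-1/2) (x+1/2), hPr (x+1/2) (t+1/2),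
          hPr (x-1/2) (t-1/2)]
        ring
      rw [h1, h2] at h3
      show centralBSpline (ℓ+2) t = _
      simp only [Polynomial.eval_add, Polynomial.eval_sub, Polynomial.eval_comp,
        Polynomial.eval_X, Polynomial.eval_C]
      rw [show t + -(1/2 : ℝ) = t - 1/2 from by ring]
      linarith
lemma my_intervalIntegrable_mul {f g : ℝ → ℝ} (hf : Measurable f) {C : ℝ}
    (hC : ∀ x, |f x| ≤ C) (hg : Continuous g) (a b : ℝ) :
    IntervalIntegrable (fun z => f z * g z) volume a b := by
  obtain ⟨M, hM⟩ := (isCompact_uIcc (a := a) (b := b)).exists_bound_of_continuousOn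
    hg.continuousOn
  rw [intervalIntegrable_iff]
  refine Integrable.mono' (g := fun _ => C * M) ?_
    ((hf.mul hg.measurable).aestronglyMeasurable) ?_
  · exact integrableOn_const measure_Ioc_lt_top.ne
  · refine (ae_restrict_mem measurableSet_uIoc).mono fun z hz => ?_
    have h1 : |f z| * |g z| ≤ C * M := by
      have hC0 : (0:ℝ) ≤ C := le_trans (abs_nonneg _) (hC z)
      exact mul_le_mul (hC z) (by simpa using hM z (Set.uIoc_subset_uIcc hz))
        (abs_nonneg _) hC0
    rw [Real.norm_eq_abs, abs_mul]
    exact h1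

lemma scaledSiacKernel_meas_bdd (q : ℕ) (c : Fin (2*q+1) → ℝ) (h : ℝ) :
    Measurable (scaledSiacKernel q c h) ∧
      ∀ x, |scaledSiacKernel q c h x| ≤ |h⁻¹| * ∑ γ : Fin (2*q+1), |c γ| := by
  constructor
  · refine measurable_const.mul (Finset.measurable_sum _ fun γ _ => ?_)
    exact measurable_const.mul ((centralBSpline_meas_bdd (q+1)).1.comp
      ((measurable_id.div_const h).sub_const _))
  · intro x
    unfold scaledSiacKernel siacKernel
    rw [abs_mul]
    refine mul_le_mul_of_nonneg_left ?_ (abs_nonneg _)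
    refine (Finset.abs_sum_le_sum_abs _ _).trans (Finset.sum_le_sum fun γ _ => ?_)
    rw [abs_mul]
    calc |c γ| * |centralBSpline (q+1) (x / h - (-(q:ℝ) + (γ:ℕ)))|
        ≤ |c γ| * 1 := mul_le_mul_of_nonneg_left
          ((centralBSpline_meas_bdd (q+1)).2 _) (abs_nonneg _)
      _ = |c γ| := mul_one _

lemma K_locPoly (q : ℕ) (c : Fin (2*q+1) → ℝ) {h : ℝ} (hh : h ≠ 0) :
    ∃ DK : Finset ℝ, ∀ x : ℝ, x ∉ DK → ∃ Q : Polynomial ℝ, Q.natDegree ≤ q ∧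
      ∀ᶠ y in nhds x, scaledSiacKernel q c h y = Q.eval y := by
  obtain ⟨D, hD⟩ := centralBSpline_locPoly q
  refine ⟨Finset.univ.biUnion (fun γ : Fin (2*q+1) =>
    D.image (fun d => (d + (-(q:ℝ) + γ)) * h)), fun x hx => ?_⟩
  have hγ : ∀ γ : Fin (2*q+1), x / h - (-(q:ℝ) + γ) ∉ D := by
    intro γ hmem
    refine hx ?_
    rw [Finset.mem_biUnion]
    refine ⟨γ, Finset.mem_univ _, Finset.mem_image.2 ⟨_, hmem, ?_⟩⟩
    field_simp
    ring
  choose Qγ hQγdeg hQγ using fun γ => hD _ (hγ γ)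
  have hev : ∀ᶠ y in nhds x, ∀ γ : Fin (2*q+1),
      centralBSpline (q+1) (y/h - (-(q:ℝ)+γ)) = (Qγ γ).eval (y/h - (-(q:ℝ)+γ)) := by
    rw [eventually_all]
    intro γ
    have hcont : Continuous fun y : ℝ => y/h - (-(q:ℝ)+γ) :=
      (continuous_id.div_const h).sub continuous_const
    exact (hcont.continuousAt (x := x)).eventually (hQγ γ)
  refine ⟨Polynomial.C h⁻¹ * ∑ γ : Fin (2*q+1), Polynomial.C (c γ) *
      ((Qγ γ).comp (Polynomial.C h⁻¹ * Polynomial.X + Polynomial.C (-(-(q:ℝ)+γ)))), ?_, ?_⟩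
  · refine (Polynomial.natDegree_C_mul_le _ _).trans ?_
    refine Polynomial.natDegree_sum_le_of_forall_le _ _ fun γ _ => ?_
    refine (Polynomial.natDegree_C_mul_le _ _).trans ?_
    refine (Polynomial.natDegree_comp_le).trans ?_
    have hlin : (Polynomial.C h⁻¹ * Polynomial.X
        + Polynomial.C (-(-(q:ℝ)+γ))).natDegree ≤ 1 :=
      (Polynomial.natDegree_add_le _ _).trans (max_le
        ((Polynomial.natDegree_C_mul_le _ _).trans Polynomial.natDegree_X_le)
        (by rw [Polynomial.natDegree_C]; omega))
    exact le_trans (Nat.mul_le_mul (hQγdeg γ) hlin) (by omega)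
  · filter_upwards [hev] with y hy
    unfold scaledSiacKernel siacKernel
    rw [Polynomial.eval_mul, Polynomial.eval_C, Polynomial.eval_finset_sum]
    congr 1
    refine Finset.sum_congr rfl fun γ _ => ?_
    rw [Polynomial.eval_mul, Polynomial.eval_C, Polynomial.eval_comp]
    simp only [Polynomial.eval_add, Polynomial.eval_mul, Polynomial.eval_C,
      Polynomial.eval_X]
    rw [hy γ]
    congr 2
    field_simp
    ring
  
lemma contDiffAt_top_continuousAt_iteratedDeriv {f : ℝ → ℝ} {x : ℝ}
    (hf : ContDiffAt ℝ (⊤ : ℕ∞) f x) (j : ℕ) : ContinuousAt (iteratedDeriv j f) x := by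
  obtain ⟨u, hu, hcd⟩ := hf.contDiffOn (m := j) (by exact_mod_cast le_top) (by simp)
  obtain ⟨t, hts, hto, hxt⟩ := mem_nhds_iff.1 hu
  have h1 : ContDiffOn ℝ j f t := hcd.mono hts
  have h2 : ContinuousOn (iteratedDerivWithin j f t) t :=
    h1.continuousOn_iteratedDerivWithin (le_refl _) hto.uniqueDiffOn
  have h3 : ∀ y ∈ t, iteratedDeriv j f y = iteratedDerivWithin j f t y := fun y hy => by
    simp only [iteratedDerivWithin, iteratedDeriv, iteratedFDerivWithin_of_isOpen j hto hy]
  exact ((h2.congr h3).continuousAt (hto.mem_nhds hxt))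
lemma K_locPoly_of_smooth (q : ℕ) (c : Fin (2*q+1) → ℝ) {h : ℝ} (hh : h ≠ 0)
    {x : ℝ} (hsm : ContDiffAt ℝ (⊤ : ℕ∞) (scaledSiacKernel q c h) x) :
    ∃ Q : Polynomial ℝ, Q.natDegree ≤ q ∧
      ∀ᶠ y in nhds x, scaledSiacKernel q c h y = Q.eval y := by
  set K := scaledSiacKernel q c h with hK
  obtain ⟨DK, hDK⟩ := K_locPoly q c hh
  by_cases hxD : x ∈ DK
  swap
  · exact hDK x hxD
  have hiso : ∃ ε > 0, ∀ y ∈ DK, |y - x| < ε → y = x := by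
    classical
    by_cases hne : (DK.erase x).Nonempty
    · refine ⟨(DK.erase x).inf' hne (fun d => |d - x|), ?_, ?_⟩
      · rw [gt_iff_lt, Finset.lt_inf'_iff]
        intro d hd
        exact abs_pos.2 (sub_ne_zero.2 (Finset.ne_of_mem_erase hd))
      · intro y hy hlt
        by_contra hne2
        exact absurd hlt (not_lt.2 (Finset.inf'_le _ (Finset.mem_erase.2 ⟨hne2, hy⟩)))
    · exact ⟨1, one_pos, fun y hy _ => by
        by_contra hne2
        exact hne ⟨y, Finset.mem_erase.2 ⟨hne2, hy⟩⟩⟩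
  obtain ⟨ε, hε, hiso⟩ := hiso
  have hsub : ∀ y : ℝ, y ≠ x → |y - x| < ε → y ∉ DK :=
    fun y hne hlt hmem => hne (hiso y hmem hlt)
  obtain ⟨QL, hQLdeg, hQL⟩ : ∃ Q : Polynomial ℝ, Q.natDegree ≤ q ∧
      ∀ y ∈ Set.Ioo (x-ε) x, K y = Q.eval y :=
    polyGlue isPreconnected_Ioo isOpen_Ioo (fun y hy => hDK y (hsub y (ne_of_lt hy.2)
      (abs_lt.2 ⟨by linarith [hy.1], by linarith [hy.2]⟩)))
  obtain ⟨QR, hQRdeg, hQR⟩ : ∃ Q : Polynomial ℝ, Q.natDegree ≤ q ∧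
      ∀ y ∈ Set.Ioo x (x+ε), K y = Q.eval y :=
    polyGlue isPreconnected_Ioo isOpen_Ioo (fun y hy => hDK y (hsub y (ne_of_gt hy.1)
      (abs_lt.2 ⟨by linarith [hy.1], by linarith [hy.2]⟩)))
  have hder : ∀ j : ℕ, (Polynomial.derivative^[j] QL).eval x = iteratedDeriv j K x
      ∧ (Polynomial.derivative^[j] QR).eval x = iteratedDeriv j K x := by
    intro j
    have hcont := contDiffAt_top_continuousAt_iteratedDeriv hsm j
    constructor
    · have hevL : ∀ y ∈ Set.Ioo (x-ε) x, iteratedDeriv j K y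
          = (Polynomial.derivative^[j] QL).eval y := by
        intro y hy
        have hev : K =ᶠ[nhds y] fun t => QL.eval t :=
          eventually_of_mem (isOpen_Ioo.mem_nhds hy) (fun t ht => hQL t ht)
        rw [hev.iteratedDeriv_eq j, poly_iteratedDeriv]
      have hne : (nhdsWithin x (Set.Ioo (x-ε) x)).NeBot := by
        rw [nhdsWithin_Ioo_eq_nhdsLT (by linarith : x - ε < x)]
        infer_instance
      have t1 : Filter.Tendsto (iteratedDeriv j K) (nhdsWithin x (Set.Ioo (x-ε) x))
          (nhds (iteratedDeriv j K x)) := hcont.tendsto.mono_left nhdsWithin_le_nhds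
      have t2 : Filter.Tendsto (iteratedDeriv j K) (nhdsWithin x (Set.Ioo (x-ε) x))
          (nhds ((Polynomial.derivative^[j] QL).eval x)) := by
        refine Filter.Tendsto.congr' ?_
          (((Polynomial.derivative^[j] QL).continuous.tendsto x).mono_left
            nhdsWithin_le_nhds)
        exact eventually_mem_nhdsWithin.mono fun y hy => (hevL y hy).symm
      exact tendsto_nhds_unique t2 t1
    · have hevR : ∀ y ∈ Set.Ioo x (x+ε), iteratedDeriv j K y
          = (Polynomial.derivative^[j] QR).eval y := by
        intro y hy
        have hev : K =ᶠ[nhds y] fun t => QR.eval t :=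
          eventually_of_mem (isOpen_Ioo.mem_nhds hy) (fun t ht => hQR t ht)
        rw [hev.iteratedDeriv_eq j, poly_iteratedDeriv]
      have hne : (nhdsWithin x (Set.Ioo x (x+ε))).NeBot := by
        rw [nhdsWithin_Ioo_eq_nhdsGT (by linarith : x < x + ε)]
        infer_instance
      have t1 : Filter.Tendsto (iteratedDeriv j K) (nhdsWithin x (Set.Ioo x (x+ε)))
          (nhds (iteratedDeriv j K x)) := hcont.tendsto.mono_left nhdsWithin_le_nhds
      have t2 : Filter.Tendsto (iteratedDeriv j K) (nhdsWithin x (Set.Ioo x (x+ε)))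
          (nhds ((Polynomial.derivative^[j] QR).eval x)) := by
        refine Filter.Tendsto.congr' ?_
          (((Polynomial.derivative^[j] QR).continuous.tendsto x).mono_left
            nhdsWithin_le_nhds)
        exact eventually_mem_nhdsWithin.mono fun y hy => (hevR y hy).symm
      exact tendsto_nhds_unique t2 t1
  have hQLR : QL = QR := by
    have hz : QR - QL = 0 := by
      refine poly_zero_of_derivs (n := q) (x := x)
        ((Polynomial.natDegree_sub_le _ _).trans (max_le hQRdeg hQLdeg)) fun j _ => ?_
      rw [Polynomial.iterate_derivative_sub, Polynomial.eval_sub, (hder j).1, (hder j).2,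
        sub_self]
    exact (sub_eq_zero.1 hz).symm
  refine ⟨QL, hQLdeg, ?_⟩
  rw [Metric.eventually_nhds_iff_ball]
  refine ⟨ε, hε, fun y hy => ?_⟩
  rw [Metric.mem_ball, Real.dist_eq, abs_lt] at hy
  rcases lt_trichotomy y x with hlt | rfl | hgt
  · exact hQL y ⟨by linarith [hy.1], hlt⟩
  · have h0 := (hder 0).1
    simpa using h0.symm
  · rw [hQLR]
    exact hQR y ⟨hgt, by linarith [hy.2]⟩
lemma intervalIntegrable_finset_sum {ι : Type*} (s : Finset ι) {f : ι → ℝ → ℝ} {a b : ℝ}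
    (hf : ∀ i ∈ s, IntervalIntegrable (f i) volume a b) :
    IntervalIntegrable (fun z => ∑ i ∈ s, f i z) volume a b := by
  classical
  induction s using Finset.induction with
  | empty => simpa using intervalIntegrable_const
  | @insert j t hnotmem ih =>
    simp only [Finset.sum_insert hnotmem]
    exact (hf _ (Finset.mem_insert_self _ _)).add
      (ih fun i hi => hf i (Finset.mem_insert_of_mem hi))

set_option maxHeartbeats 1000000 in
lemma F_locPoly {K : ℝ → ℝ} (Kmeas : Measurable K) {CK : ℝ} (Kbd : ∀ x, |K x| ≤ CK)
    {h : ℝ} (q : ℕ) (P : Polynomial ℝ) (hP : P.natDegree ≤ q) {x₀ : ℝ}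
    {Q₁ Q₂ : Polynomial ℝ} (hQ₁deg : Q₁.natDegree ≤ q) (hQ₂deg : Q₂.natDegree ≤ q)
    (hQ₁ : ∀ᶠ y in nhds x₀, K y = Q₁.eval y)
    (hQ₂ : ∀ᶠ y in nhds (x₀ - h), K y = Q₂.eval y) :
    ∃ E : Polynomial ℝ, E.natDegree ≤ 2*q + 1 ∧
      ∀ᶠ x in nhds x₀, (∫ z in (x - h)..x, K z * P.eval (x - z))
        = E.eval x := by
  have hKint : ∀ (g : ℝ → ℝ), Continuous g → ∀ a b : ℝ,
      IntervalIntegrable (fun z => K z * g z) volume a b :=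
    fun g hg => my_intervalIntegrable_mul Kmeas Kbd hg
  obtain ⟨e1, he1, hball1⟩ := Metric.eventually_nhds_iff_ball.1 hQ₁
  obtain ⟨e2, he2, hball2⟩ := Metric.eventually_nhds_iff_ball.1 hQ₂
  set n := P.natDegree with hn
  rw [hn] at hP
  -- pointwise expansion of the integrand
  have hexp : ∀ x z : ℝ, K z * P.eval (x - z)
      = ∑ m ∈ Finset.range (n+1), ∑ i ∈ Finset.range (m+1),
        (P.coeff m * (m.choose i) * x^i * (-1)^(m-i)) * (K z * z^(m-i)) := by
    intro x z
    rw [Polynomial.eval_eq_sum_range, Finset.mul_sum]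
    refine Finset.sum_congr rfl fun m _ => ?_
    rw [show (x - z) = x + (-z) by ring, add_pow, Finset.mul_sum, Finset.mul_sum]
    refine Finset.sum_congr rfl fun i _ => ?_
    rw [neg_pow]
    ring
  -- the moment integrals
  set G : ℕ → ℝ → ℝ := fun p x => ∫ z in (x-h)..x, K z * z^p with hG
  have hFsum : ∀ x : ℝ,
      (∫ z in (x - h)..x, K z * P.eval (x - z))
      = ∑ m ∈ Finset.range (n+1), ∑ i ∈ Finset.range (m+1),
        (P.coeff m * (m.choose i) * x^i * (-1)^(m-i)) * G (m-i) x := by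
    intro x
    rw [show (fun z => K z * P.eval (x - z))
      = fun z => ∑ m ∈ Finset.range (n+1), ∑ i ∈ Finset.range (m+1),
        (P.coeff m * (m.choose i) * x^i * (-1)^(m-i)) * (K z * z^(m-i))
      from funext fun z => hexp x z]
    rw [intervalIntegral.integral_finset_sum (μ := volume) (a := x-h) (b := x)
      (s := Finset.range (n+1))
      (f := fun m z => ∑ i ∈ Finset.range (m+1),
        (P.coeff m * (m.choose i) * x^i * (-1)^(m-i)) * (K z * z^(m-i)))
      (fun m _ => intervalIntegrable_finset_sum _ (fun i _ =>
        ((hKint (fun z => z^(m-i)) (continuous_pow _) (x-h) x)).const_mul _))]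
    refine Finset.sum_congr rfl fun m _ => ?_
    rw [intervalIntegral.integral_finset_sum (μ := volume) (a := x-h) (b := x)
      (s := Finset.range (m+1))
      (f := fun i z => (P.coeff m * (m.choose i) * x^i * (-1)^(m-i)) * (K z * z^(m-i)))
      (fun i _ => ((hKint (fun z => z^(m-i)) (continuous_pow _) (x-h) x)).const_mul _)]
    refine Finset.sum_congr rfl fun i _ => ?_
    rw [intervalIntegral.integral_const_mul]
  -- local polynomial representation of G p
  set ε := min e1 e2 with hε
  have hεpos : 0 < ε := lt_min he1 he2
  have hGloc : ∀ p : ℕ, ∀ x : ℝ, |x - x₀| < ε →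
      G p x = G p x₀
        + ((polyAntideriv (Q₁ * Polynomial.X^p)).eval x
          - (polyAntideriv (Q₁ * Polynomial.X^p)).eval x₀)
        - ((polyAntideriv (Q₂ * Polynomial.X^p)).eval (x-h)
          - (polyAntideriv (Q₂ * Polynomial.X^p)).eval (x₀-h)) := by
    intro p x hx
    have hint := hKint (fun z => z^p) (continuous_pow p)
    have hsplit1 : (∫ z in (x-h)..(x₀-h), K z * z^p) + ∫ z in (x₀-h)..x, K z * z^p
        = G p x := intervalIntegral.integral_add_adjacent_intervals (hint _ _) (hint _ _)
    have hsplit2 : (∫ z in (x₀-h)..x₀, K z * z^p) + ∫ z in x₀..x, K z * z^p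
        = ∫ z in (x₀-h)..x, K z * z^p :=
      intervalIntegral.integral_add_adjacent_intervals (hint _ _) (hint _ _)
    have hseg1 : (∫ z in x₀..x, K z * z^p)
        = (polyAntideriv (Q₁ * Polynomial.X^p)).eval x
          - (polyAntideriv (Q₁ * Polynomial.X^p)).eval x₀ := by
      rw [intervalIntegral.integral_congr
        (g := fun z => (Q₁ * Polynomial.X^p).eval z), poly_integral]
      intro s hs
      have hs' : s ∈ Metric.ball x₀ e1 := uIcc_subset_ball (by simpa using he1)
        (lt_of_lt_of_le hx (min_le_left _ _)) hs
      simp only [Polynomial.eval_mul, Polynomial.eval_pow, Polynomial.eval_X]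
      rw [hball1 s hs']
    have hseg2 : (∫ z in (x₀-h)..(x-h), K z * z^p)
        = (polyAntideriv (Q₂ * Polynomial.X^p)).eval (x-h)
          - (polyAntideriv (Q₂ * Polynomial.X^p)).eval (x₀-h) := by
      rw [intervalIntegral.integral_congr
        (g := fun z => (Q₂ * Polynomial.X^p).eval z), poly_integral]
      intro s hs
      have hs' : s ∈ Metric.ball (x₀ - h) e2 := uIcc_subset_ball (by simpa using he2)
        (by
          rw [show x - h - (x₀ - h) = x - x₀ by ring]
          exact lt_of_lt_of_le hx (min_le_right _ _)) hs
      simp only [Polynomial.eval_mul, Polynomial.eval_pow, Polynomial.eval_X]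
      rw [hball2 s hs']
    have hsymm : (∫ z in (x-h)..(x₀-h), K z * z^p)
        = - ∫ z in (x₀-h)..(x-h), K z * z^p := intervalIntegral.integral_symm _ _
    have : G p x₀ = ∫ z in (x₀-h)..x₀, K z * z^p := rfl
    rw [← hsplit1, hsymm, hseg2, ← hsplit2, hseg1, this]
    ring
  -- assemble the polynomial
  refine ⟨∑ m ∈ Finset.range (n+1), ∑ i ∈ Finset.range (m+1),
    Polynomial.C (P.coeff m * (m.choose i) * (-1)^(m-i)) * Polynomial.X^i *
      (Polynomial.C (G (m-i) x₀)
        + (polyAntideriv (Q₁ * Polynomial.X^(m-i))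
            - Polynomial.C ((polyAntideriv (Q₁ * Polynomial.X^(m-i))).eval x₀))
        - ((polyAntideriv (Q₂ * Polynomial.X^(m-i))).comp
              (Polynomial.X - Polynomial.C h)
            - Polynomial.C ((polyAntideriv (Q₂ * Polynomial.X^(m-i))).eval (x₀-h)))),
    ?_, ?_⟩
  · refine Polynomial.natDegree_sum_le_of_forall_le _ _ fun m hm => ?_
    refine Polynomial.natDegree_sum_le_of_forall_le _ _ fun i hi => ?_
    rw [Finset.mem_range] at hm hi
    have hA1 : (polyAntideriv (Q₁ * Polynomial.X^(m-i))).natDegree ≤ q + (m-i) + 1 :=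
      (polyAntideriv_natDegree _).trans (Nat.add_le_add_right
        ((Polynomial.natDegree_mul_le).trans (by
          rw [Polynomial.natDegree_X_pow]
          exact Nat.add_le_add_right hQ₁deg _)) 1)
    have hA2 : (polyAntideriv (Q₂ * Polynomial.X^(m-i))).natDegree ≤ q + (m-i) + 1 :=
      (polyAntideriv_natDegree _).trans (Nat.add_le_add_right
        ((Polynomial.natDegree_mul_le).trans (by
          rw [Polynomial.natDegree_X_pow]
          exact Nat.add_le_add_right hQ₂deg _)) 1)
    have hbig : (Polynomial.C (G (m-i) x₀)
        + (polyAntideriv (Q₁ * Polynomial.X^(m-i))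
            - Polynomial.C ((polyAntideriv (Q₁ * Polynomial.X^(m-i))).eval x₀))
        - ((polyAntideriv (Q₂ * Polynomial.X^(m-i))).comp
              (Polynomial.X - Polynomial.C h)
            - Polynomial.C ((polyAntideriv (Q₂ * Polynomial.X^(m-i))).eval (x₀-h)))).natDegree
        ≤ q + (m-i) + 1 := by
      refine (Polynomial.natDegree_sub_le _ _).trans (max_le ?_ ?_)
      · refine (Polynomial.natDegree_add_le _ _).trans (max_le ?_ ?_)
        · rw [Polynomial.natDegree_C]; omega
        · refine (Polynomial.natDegree_sub_le _ _).trans (max_le hA1 ?_)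
          rw [Polynomial.natDegree_C]; omega
      · refine (Polynomial.natDegree_sub_le _ _).trans (max_le ?_ ?_)
        · refine (Polynomial.natDegree_comp_le).trans ?_
          have hlin : (Polynomial.X - Polynomial.C h).natDegree ≤ 1 := by
            rw [show Polynomial.X - Polynomial.C h
              = Polynomial.X + Polynomial.C (-h) from by
                rw [Polynomial.C_neg, ← sub_eq_add_neg],
              Polynomial.natDegree_X_add_C]
          exact (Nat.mul_le_mul hA2 hlin).trans (le_of_eq (mul_one _))
        · rw [Polynomial.natDegree_C]; omega
    refine (Polynomial.natDegree_mul_le).trans ?_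
    have h1 : (Polynomial.C (P.coeff m * (m.choose i) * (-1)^(m-i))
        * Polynomial.X^i).natDegree ≤ i :=
      (Polynomial.natDegree_mul_le).trans (by
        rw [Polynomial.natDegree_C, Polynomial.natDegree_X_pow]; omega)
    refine le_trans (Nat.add_le_add h1 hbig) ?_
    omega
  · rw [Metric.eventually_nhds_iff_ball]
    refine ⟨ε, hεpos, fun x hx => ?_⟩
    rw [Metric.mem_ball, Real.dist_eq] at hx
    rw [hFsum x]
    rw [Polynomial.eval_finset_sum]
    refine Finset.sum_congr rfl fun m _ => ?_
    rw [Polynomial.eval_finset_sum]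
    refine Finset.sum_congr rfl fun i _ => ?_
    rw [hGloc (m-i) x hx]
    simp only [Polynomial.eval_mul, Polynomial.eval_add, Polynomial.eval_sub,
      Polynomial.eval_C, Polynomial.eval_pow, Polynomial.eval_X, Polynomial.eval_comp]
    ring
/-- **Local polynomial structure of the SIAC-filtered function.**
With `K_h` the scaled SIAC kernel, `p` a polynomial of degree at most `q`,
`v_h = χ_{[0,h]} p`, `F_p = K_h * v_h`, `B_h` the finite set of points where `K_h` is not
smooth and `S_h = B_h ∪ (B_h + h)`: the `(2q+2)`-nd derivative of `F_p` vanishes on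
`ℝ \ S_h`; consequently, on each open interval disjoint from `S_h`, `F_p` coincides with
a polynomial of degree at most `2q+1`, so the polynomial representation of `K_h * v_h`
can change only at points of `S_h`. -/
theorem siac_filtered_piecewise_polynomial
    (q : ℕ) (hq : 1 ≤ q) (h : ℝ) (hh : 0 < h) (c : Fin (2 * q + 1) → ℝ)
    (hrep : ∀ p : ℕ, p ≤ 2 * q → ∀ x : ℝ,
      (∫ y : ℝ, siacKernel q c y * (x - y) ^ p) = x ^ p)
    (B : Finset ℝ)
    (hB : ∀ x : ℝ, x ∉ (B : Set ℝ) → ContDiffAt ℝ (⊤ : ℕ∞) (scaledSiacKernel q c h) x)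
    (hB' : ∀ x ∈ (B : Set ℝ), ¬ ContDiffAt ℝ (⊤ : ℕ∞) (scaledSiacKernel q c h) x)
    (P : Polynomial ℝ) (hP : P.natDegree ≤ q) :
    (∀ x : ℝ, x ∉ (B : Set ℝ) ∪ ((fun b => b + h) '' (B : Set ℝ)) →
      iteratedDeriv (2 * q + 2)
          (fun x' : ℝ => ∫ z in (x' - h)..x', scaledSiacKernel q c h z * P.eval (x' - z)) x
        = 0) ∧
    ∀ a b : ℝ,
      Set.Ioo a b ∩ ((B : Set ℝ) ∪ ((fun b' => b' + h) '' (B : Set ℝ))) = ∅ →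
      ∃ Q : Polynomial ℝ, Q.natDegree ≤ 2 * q + 1 ∧
        ∀ x ∈ Set.Ioo a b,
          (∫ z in (x - h)..x, scaledSiacKernel q c h z * P.eval (x - z)) = Q.eval x := by
  have hh' : h ≠ 0 := ne_of_gt hh
  have hmain : ∀ x₀ : ℝ, x₀ ∉ (B : Set ℝ) ∪ ((fun b => b + h) '' (B : Set ℝ)) →
      ∃ E : Polynomial ℝ, E.natDegree ≤ 2*q+1 ∧ ∀ᶠ x in nhds x₀,
        (∫ z in (x - h)..x, scaledSiacKernel q c h z * P.eval (x - z)) = E.eval x := by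
    intro x₀ hx₀
    have hx₀B : x₀ ∉ (B : Set ℝ) := fun hm => hx₀ (Or.inl hm)
    have hx₀hB : x₀ - h ∉ (B : Set ℝ) := fun hm => hx₀ (Or.inr ⟨x₀ - h, hm, by ring⟩)
    obtain ⟨Q₁, hQ₁d, hQ₁⟩ := K_locPoly_of_smooth q c hh' (hB x₀ hx₀B)
    obtain ⟨Q₂, hQ₂d, hQ₂⟩ := K_locPoly_of_smooth q c hh' (hB _ hx₀hB)
    obtain ⟨Km, Kb⟩ := scaledSiacKernel_meas_bdd q c h
    exact F_locPoly Km Kb q P hP hQ₁d hQ₂d hQ₁ hQ₂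
  constructor
  · intro x hx
    obtain ⟨E, hEdeg, hev⟩ := hmain x hx
    have heq := Filter.EventuallyEq.iteratedDeriv_eq (2*q+2)
      (hev : (fun x' : ℝ => ∫ z in (x' - h)..x',
        scaledSiacKernel q c h z * P.eval (x' - z)) =ᶠ[nhds x] fun x' => E.eval x')
    rw [heq, poly_iteratedDeriv,
      Polynomial.iterate_derivative_eq_zero (show E.natDegree < 2*q+2 by omega)]
    simp
  · intro a b hab
    refine polyGlue isPreconnected_Ioo isOpen_Ioo fun x hx => ?_
    have hxS : x ∉ (B : Set ℝ) ∪ ((fun b' => b' + h) '' (B : Set ℝ)) := by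
      intro hmem
      have : x ∈ Set.Ioo a b ∩ ((B : Set ℝ) ∪ ((fun b' => b' + h) '' (B : Set ℝ))) :=
        ⟨hx, hmem⟩
      rw [hab] at this
      exact this
    exact hmain x hxS
end
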